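/- Let a, b ≥ 0 with m = a + b ≥ 1, and let V be a diagonal operator on (ℂ²)^⊗m (diagonal in the computational basis) whose diagonal entry at the all-zeros basis vector |0…0⟩ equals 1. Then V(|+⟩^⊗a ⊗ |−⟩^⊗b) ≠ −(|+⟩^⊗a ⊗ |−⟩^⊗b). (This is Eq. (1) in the proof of Theorem 3: no diagonal gate in the Z basis of the ADIQP form can have |+⟩^⊗a ⊗ |−⟩^⊗b as a (−1)-eigenvector.) -/
import Mathlib

open scoped BigOperators

noncomputable section

def plusMinusState (a b : ℕ) : (Fin (a + b) → Fin 2) → ℂ :=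
  fun x => (Real.sqrt 2 : ℂ)⁻¹ ^ (a + b) *
    ∏ i : Fin (a + b), if (i : ℕ) < a then 1 else (-1 : ℂ) ^ (x i : ℕ)

/-- For `m = a + b ≥ 1` and any diagonal operator `V` on `(ℂ²)^⊗m` (given by
its diagonal entries `vd` in the computational basis) whose diagonal entry at
the all-zeros basis vector equals `1`, the state `|+⟩^⊗a ⊗ |−⟩^⊗b` is not a
`(−1)`-eigenvector of `V`. -/
theorem diag_op_no_minus_one_eigenvector
    (a b : ℕ) (hm : 1 ≤ a + b)
    (vd : (Fin (a + b) → Fin 2) → ℂ)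
    (hv0 : vd (fun _ => 0) = 1) :
    (fun x => vd x * plusMinusState a b x) ≠ fun x => -plusMinusState a b x := by
  intro h
  have h0 := congrFun h (fun _ => 0)
  have hψ : plusMinusState a b (fun _ => 0) = (Real.sqrt 2 : ℂ)⁻¹ ^ (a + b) := by
    simp [plusMinusState]
  rw [hv0, one_mul, hψ] at h0
  have hne : ((Real.sqrt 2 : ℂ)⁻¹ ^ (a + b)) ≠ 0 := by
    apply pow_ne_zero
    simp [Real.sqrt_eq_zero']
  have : (2 : ℂ) * (Real.sqrt 2 : ℂ)⁻¹ ^ (a + b) = 0 := by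
    linear_combination h0
  simp [hne] at this

end
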